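/- arXiv:2106.10953 — 4 statements merged into one kernel-verified Lean document; each statement's English description precedes it below -/
import Mathlib

section
/- Let G be a finite group with irreducible characters χ₁,…,χ_r. Then G is almost monomial (i.e., for every pair of distinct irreducible characters χ ≠ ψ there exist a subgroup H ≤ G and a linear character λ of H such that χ is a constituent of the induced character λ^G and ψ is not) if and only if for every k ∈ {1,…,r} there exist subgroups H₁,…,H_m of G and linear characters λ₁,…,λ_m of them such that the set of irreducible constituents of λ₁^G + ⋯ + λ_m^G is exactly Irr(G) \ {χ_k}. -/
open scoped Classical BigOperators

noncomputable def cInd {G : Type} [Group G] [Fintype G] (H : Subgroup G)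
    (f : H → ℂ) : G → ℂ := fun g =>
  (Nat.card H : ℂ)⁻¹ *
    ∑ x : G, if h : x⁻¹ * g * x ∈ H then f ⟨x⁻¹ * g * x, h⟩ else 0

noncomputable def cInner (G : Type) [Group G] [Fintype G] (φ ψ : G → ℂ) : ℂ :=
  (Nat.card G : ℂ)⁻¹ * ∑ g : G, φ g * starRingEnd ℂ (ψ g)

/-- `χ` is the character of some finite-dimensional complex representation of `G`. -/
def IsChar (G : Type) [Group G] (χ : G → ℂ) : Prop :=
  ∃ V : FDRep ℂ G, FDRep.character V = χ

/-- `χ` is the character of some irreducible complex representation of `G`. -/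
def IsIrrChar (G : Type) [Group G] (χ : G → ℂ) : Prop :=
  ∃ V : FDRep ℂ G, CategoryTheory.Simple V ∧ FDRep.character V = χ

/-- `χ` is a constituent of `θ`: their inner product is nonzero. -/
def IsConstituent {G : Type} [Group G] [Fintype G] (χ θ : G → ℂ) : Prop :=
  cInner G θ χ ≠ 0

def charKer {G : Type} [Group G] (χ : G → ℂ) : Set G := {g | χ g = χ 1}

/-- The supercharacter attached to a set `X` of irreducible characters. -/
noncomputable def superchar {G : Type} [Group G] (X : Set (G → ℂ)) : G → ℂ :=
  fun g => ∑ᶠ ψ ∈ X, ψ 1 * ψ g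

def Monomial (G : Type) [Group G] [Fintype G] : Prop :=
  ∀ χ : G → ℂ, IsIrrChar G χ →
    ∃ (H : Subgroup G) (lam : H →* ℂ), cInd H (fun h => lam h) = χ

def QuasiMonomial (G : Type) [Group G] [Fintype G] : Prop :=
  ∀ χ : G → ℂ, IsIrrChar G χ →
    ∃ (H : Subgroup G) (lam : H →* ℂ) (d : ℕ), 0 < d ∧
      cInd H (fun h => lam h) = fun g => (d : ℂ) * χ g

def AlmostMonomial (G : Type) [Group G] [Fintype G] : Prop :=
  ∀ χ ψ : G → ℂ, IsIrrChar G χ → IsIrrChar G ψ → χ ≠ ψ →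
    ∃ (H : Subgroup G) (lam : H →* ℂ),
      IsConstituent χ (cInd H (fun h => lam h)) ∧
      ¬ IsConstituent ψ (cInd H (fun h => lam h))

/-- A supercharacter theory of a finite group `G` (Diaconis–Isaacs). -/
structure SCTheory (G : Type) [Group G] where
  XX : Set (Set (G → ℂ))
  KK : Set (Set G)
  XX_nonempty : ∀ X ∈ XX, X.Nonempty
  XX_disj : ∀ X ∈ XX, ∀ Y ∈ XX, X ≠ Y → Disjoint X Y
  XX_cover : ⋃₀ XX = {χ | IsIrrChar G χ}
  KK_nonempty : ∀ K ∈ KK, K.Nonempty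
  KK_disj : ∀ K ∈ KK, ∀ L ∈ KK, K ≠ L → Disjoint K L
  KK_cover : ⋃₀ KK = Set.univ
  one_mem : ({1} : Set G) ∈ KK
  card_eq : Nat.card XX = Nat.card KK
  const : ∀ X ∈ XX, ∀ K ∈ KK, ∀ g ∈ K, ∀ g' ∈ K, superchar X g = superchar X g'

def CQuasiMonomial {G : Type} [Group G] [Fintype G] (C : SCTheory G) : Prop :=
  ∀ X ∈ C.XX, ∃ (t : ℕ) (H : Fin t → Subgroup G) (lam : ∀ i, (H i) →* ℂ) (d : ℕ),
    0 < d ∧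
    (∑ i, cInd (H i) (fun h => lam i h)) = fun g => (d : ℂ) * superchar X g

def CAlmostMonomial {G : Type} [Group G] [Fintype G] (C : SCTheory G) : Prop :=
  ∀ Xk ∈ C.XX, ∀ Xl ∈ C.XX, Xk ≠ Xl →
    ∃ (t : ℕ) (H : Fin t → Subgroup G) (lam : ∀ i, (H i) →* ℂ)
      (α : Set (G → ℂ) → ℕ),
      0 < α Xk ∧ α Xl = 0 ∧
      (∑ i, cInd (H i) (fun h => lam i h)) =
        fun g => ∑ᶠ X ∈ C.XX, (α X : ℂ) * superchar X g

/-- `N` is `C`-normal: a union of superclasses. -/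
def CNormal {G : Type} [Group G] (C : SCTheory G) (N : Subgroup G) : Prop :=
  ∃ S ⊆ C.KK, (N : Set G) = ⋃₀ S

/-- `Cq` is the supercharacter theory induced by `C` on `G ⧸ N`. -/
def IsQuotientTheory {G : Type} [Group G] (C : SCTheory G)
    (N : Subgroup G) [N.Normal] (Cq : SCTheory (G ⧸ N)) : Prop :=
  Cq.XX = {Y | ∃ X ∈ C.XX, (∀ χ ∈ X, ∀ n ∈ N, χ n = χ 1) ∧
      Y = {χ' : G ⧸ N → ℂ | (fun g : G => χ' (g : G ⧸ N)) ∈ X}} ∧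
  Cq.KK = {K' | ∃ K ∈ C.KK, K' = (fun g : G => (g : G ⧸ N)) '' K}

/-- The part `X × X'` of `Irr(G × G')`, via external products of characters. -/
def prodPart {G G' : Type} (X : Set (G → ℂ)) (X' : Set (G' → ℂ)) :
    Set (G × G' → ℂ) :=
  {χ | ∃ φ ∈ X, ∃ ψ ∈ X', χ = fun p => φ p.1 * ψ p.2}

/-- `Cp` is the product supercharacter theory `C × C'` on `G × G'`. -/
def IsProdTheory {G G' : Type} [Group G] [Group G'] (C : SCTheory G)
    (C' : SCTheory G') (Cp : SCTheory (G × G')) : Prop :=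
  Cp.XX = {S | ∃ X ∈ C.XX, ∃ X' ∈ C'.XX, S = prodPart X X'} ∧
  Cp.KK = {S | ∃ K ∈ C.KK, ∃ K' ∈ C'.KK, S = K ×ˢ K'}

/-!
For a linear character `λ` of `H ≤ G` and any character `χ` of `G`, Frobenius reciprocity
makes `⟨λ^G, χ⟩` the multiplicity of the trivial character in `λ · χ̄` restricted to `H`, a
natural number. Hence the constituents of `λ₁^G + ⋯ + λ_m^G` are exactly the union of the
constituents of the `λᵢ^G`. Given almost monomiality, summing one separating `λ^G` for each
of the finitely many `χ ≠ χₖ` gives constituent set `Irr(G) \ {χₖ}`; conversely, a summand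
of such a sum having `χ` as constituent cannot have `χₖ`.
-/

open ComplexConjugate

lemma IsIrrChar.isChar {G : Type} [Group G] {χ : G → ℂ} (hχ : IsIrrChar G χ) : IsChar G χ :=
  let ⟨V, _, hV⟩ := hχ; ⟨V, hV⟩

/-- Conjugating the matrix entries of `V` in a basis realises `conj ∘ χ_V`. -/
lemma exists_character_eq_mul_conj {K M : Type} [Monoid K] [Monoid M] (f : K →* M)
    (lam : K →* ℂ) (V : FDRep ℂ M) :
    ∃ W : FDRep ℂ K, ∀ k, W.character k = lam k * conj (V.character (f k)) := by
  let b := Module.finBasis ℂ V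
  let A : K →* Matrix _ _ ℂ := (starRingEnd ℂ).mapMatrix.toMonoidHom.comp
    ((LinearMap.toMatrixAlgEquiv b).toMonoidHom.comp (V.ρ.comp f))
  let ρ : Representation ℂ K (Fin (Module.finrank ℂ V) → ℂ) :=
    { toFun := fun k => Matrix.toLin' (lam k • A k)
      map_one' := by simp; rfl
      map_mul' := fun a c => by
        rw [map_mul, map_mul, ← smul_mul_smul_comm, Matrix.toLin'_mul]; rfl }
  refine ⟨FDRep.of ρ, fun k => ?_⟩
  simp [FDRep.character, ρ, A, LinearMap.trace_eq_matrix_trace ℂ b, Matrix.trace,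
    LinearMap.toMatrixAlgEquiv_apply, LinearMap.toMatrix_apply]

section IrreducibleCharacters

variable {G : Type} [Group G] [Fintype G]

noncomputable def charPairing : LinearMap.BilinForm ℂ (G → ℂ) :=
  LinearMap.mk₂ ℂ (fun φ ψ => ∑ g, φ g * ψ g⁻¹)
    (by simp [add_mul, Finset.sum_add_distrib]) (by simp [Finset.mul_sum, mul_assoc])
    (by simp [mul_add, Finset.sum_add_distrib]) (by simp [Finset.mul_sum, mul_left_comm])

lemma charPairing_apply (φ ψ : G → ℂ) : charPairing φ ψ = ∑ g, φ g * ψ g⁻¹ := rfl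

lemma charPairing_irr_self {χ : G → ℂ} (hχ : IsIrrChar G χ) :
    charPairing χ χ = Nat.card G := by
  obtain ⟨V, hV, rfl⟩ := hχ
  rw [charPairing_apply, ← FDRep.simple_iff_char_is_norm_one]
  exact hV

lemma charPairing_irr_of_ne {χ ψ : G → ℂ} (hχ : IsIrrChar G χ) (hψ : IsIrrChar G ψ)
    (hne : χ ≠ ψ) : charPairing χ ψ = 0 := by
  obtain ⟨V, hV, rfl⟩ := hχ
  obtain ⟨W, hW, rfl⟩ := hψ
  have : Invertible (Nat.card G : ℂ) :=
    invertibleOfNonzero (Nat.cast_ne_zero.mpr Nat.card_pos.ne')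
  have hVW := FDRep.char_orthonormal V W
  rw [if_neg fun ⟨i⟩ => hne (FDRep.char_iso i)] at hVW
  simpa [charPairing_apply] using hVW

lemma linearIndependent_irrChar :
    LinearIndependent ℂ (Subtype.val : {χ : G → ℂ | IsIrrChar G χ} → G → ℂ) :=
  LinearMap.BilinForm.linearIndependent_of_iIsOrtho
    (fun χ ψ hne => charPairing_irr_of_ne χ.2 ψ.2 (Subtype.coe_injective.ne hne))
    (fun χ => by simp [charPairing_irr_self χ.2])

lemma finite_setOf_isIrrChar : {χ : G → ℂ | IsIrrChar G χ}.Finite :=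
  linearIndependent_irrChar.setFinite

end IrreducibleCharacters

section InducedCharacters

variable {G : Type} [Group G] [Fintype G]

lemma cInner_sum {ι : Type*} (s : Finset ι) (φ : ι → G → ℂ) (ψ : G → ℂ) :
    cInner G (∑ i ∈ s, φ i) ψ = ∑ i ∈ s, cInner G (φ i) ψ := by
  simp only [cInner, Finset.sum_apply, Finset.sum_mul, Finset.mul_sum]
  exact Finset.sum_comm

lemma sum_dite_mem_subgroup (H : Subgroup G) (f : H → ℂ) :
    ∑ g : G, (if h : g ∈ H then f ⟨g, h⟩ else 0) = ∑ h : H, f h := by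
  rw [Finset.sum_dite, Finset.sum_const_zero, add_zero]
  exact Fintype.sum_equiv (Equiv.subtypeEquivRight (by simp)) _ _ fun _ => rfl

lemma cInner_cInd (H : Subgroup G) (f : H → ℂ) {ψ : G → ℂ}
    (hψ : ∀ g x : G, ψ (x * g * x⁻¹) = ψ g) :
    cInner G (cInd H f) ψ = (Nat.card H : ℂ)⁻¹ * ∑ h : H, f h * conj (ψ h) := by
  have sum_conj : ∀ x : G,
      ∑ g : G, (if h : x⁻¹ * g * x ∈ H then f ⟨_, h⟩ else 0) * conj (ψ g)
        = ∑ h : H, f h * conj (ψ h) := by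
    intro x
    rw [← sum_dite_mem_subgroup H]
    refine Fintype.sum_equiv ((Equiv.mulLeft x⁻¹).trans (Equiv.mulRight x)) _ _ fun g => ?_
    have : ψ (x⁻¹ * g * x) = ψ g := by simpa using hψ g x⁻¹
    simp [dite_mul, this]
  have hG : (Nat.card G : ℂ) ≠ 0 := Nat.cast_ne_zero.mpr Nat.card_pos.ne'
  calc cInner G (cInd H f) ψ
      = (Nat.card G : ℂ)⁻¹ * (Nat.card H : ℂ)⁻¹ * ∑ x : G, ∑ g : G,
          (if h : x⁻¹ * g * x ∈ H then f ⟨_, h⟩ else 0) * conj (ψ g) := by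
        simp only [cInner, cInd, mul_assoc, Finset.sum_mul, Finset.mul_sum]
        exact Finset.sum_comm
    _ = (Nat.card H : ℂ)⁻¹ * ∑ h : H, f h * conj (ψ h) := by
        simp only [sum_conj, Finset.sum_const, Finset.card_univ, nsmul_eq_mul,
          ← Nat.card_eq_fintype_card]
        field_simp

lemma exists_natCast_eq_cInner_cInd (H : Subgroup G) (lam : H →* ℂ) {ψ : G → ℂ}
    (hψ : IsChar G ψ) : ∃ n : ℕ, cInner G (cInd H fun h => lam h) ψ = n := by
  obtain ⟨V, rfl⟩ := hψ
  obtain ⟨W, hW⟩ := exists_character_eq_mul_conj H.subtype lam V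
  have : Invertible (Nat.card H : ℂ) :=
    invertibleOfNonzero (Nat.cast_ne_zero.mpr Nat.card_pos.ne')
  refine ⟨Module.finrank ℂ (Representation.invariants W.ρ), ?_⟩
  rw [cInner_cInd H _ (FDRep.char_conj V), ← FDRep.average_char_eq_finrank_invariants]
  simp only [hW, Subgroup.coe_subtype]

lemma isConstituent_sum_cInd_iff {ι : Type*} [Fintype ι] (H : ι → Subgroup G)
    (lam : ∀ i, H i →* ℂ) {ψ : G → ℂ} (hψ : IsChar G ψ) :
    IsConstituent ψ (∑ i, cInd (H i) fun h => lam i h) ↔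
      ∃ i, IsConstituent ψ (cInd (H i) fun h => lam i h) := by
  choose n hn using fun i => exists_natCast_eq_cInner_cInd (H i) (lam i) hψ
  simp only [IsConstituent, cInner_sum, hn, ← Nat.cast_sum, Nat.cast_ne_zero]
  simp [Finset.sum_eq_zero_iff]

end InducedCharacters

/-- Proposition 1.3: `G` is almost monomial iff for every irreducible character `χk`
there are subgroups and linear characters whose induced sum has constituent set
exactly `Irr(G) \ {χk}`. -/
theorem almostMonomial_iff_complement (G : Type) [Group G] [Fintype G] :
    AlmostMonomial G ↔
      ∀ χk : G → ℂ, IsIrrChar G χk →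
        ∃ (m : ℕ) (H : Fin m → Subgroup G) (lam : ∀ i, (H i) →* ℂ),
          {χ | IsIrrChar G χ ∧ IsConstituent χ (∑ i, cInd (H i) (fun h => lam i h))}
            = {χ | IsIrrChar G χ} \ {χk} := by
  constructor
  · intro hAM χk hχk
    set S := {χ : G → ℂ | IsIrrChar G χ} \ {χk}
    have : Fintype S := finite_setOf_isIrrChar.sdiff.fintype
    choose H lam hin hout using fun χ : S => hAM χ χk χ.2.1 hχk χ.2.2
    let e := Fintype.equivFin S
    refine ⟨Fintype.card S, fun i => H (e.symm i), fun i => lam (e.symm i), ?_⟩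
    ext χ
    refine ⟨fun ⟨hχ, hcons⟩ => ⟨hχ, fun hχk => ?_⟩, fun hχS => ⟨hχS.1, ?_⟩⟩
    · obtain ⟨i, hi⟩ := (isConstituent_sum_cInd_iff _ _ hχ.isChar).mp hcons
      exact hout _ (hχk ▸ hi)
    · refine (isConstituent_sum_cInd_iff _ _ hχS.1.isChar).mpr ⟨e ⟨χ, hχS⟩, ?_⟩
      simpa using hin (e.symm (e ⟨χ, hχS⟩))
  · intro hC χ ψ hχ hψ hne
    obtain ⟨m, H, lam, hset⟩ := hC ψ hψ
    have hmem := Set.ext_iff.mp hset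
    obtain ⟨i, hi⟩ :=
      (isConstituent_sum_cInd_iff H lam hχ.isChar).mp ((hmem χ).mpr ⟨hχ, hne⟩).2
    refine ⟨H i, lam i, hi, fun hψi => ?_⟩
    have hψ_cons := (isConstituent_sum_cInd_iff H lam hψ.isChar).mpr ⟨i, hψi⟩
    exact ((hmem ψ).mp ⟨hψ, hψ_cons⟩).2 rfl
end

section
/- Let G be a finite group with supercharacter theory C, and let N ⊴ G be a C-normal subgroup (a union of superclasses). If G is C-quasi-monomial, then G/N is C^{G/N}-quasi-monomial, where C^{G/N} is the induced supercharacter theory on G/N. -/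
open scoped Classical BigOperators

/-! Average `∑ᵢ λᵢ^G = d • σ_X` over the cosets of `N`. A representation whose character equals
`χ 1` on `N` is trivial on `N` (its `N`-invariants have full dimension), so the right side is
constant on cosets and is the inflation of `d • σ_Y`. On the left, the `N`-average of `λ^G` vanishes when `λ` is nontrivial on `H ∩ N`,
and otherwise is the inflation of `λ̄^{G/N}`, where `λ̄` is the linear character of
`HN/N ≅ H/(H ∩ N)` defined by `λ`. Dropping the vanishing terms writes `d • σ_Y` as a sum of
characters induced from linear characters of subgroups of `G/N`. -/

open Finset

theorem FDRep.ρ_eq_one_of_character_eq {G : Type} [Group G] [Fintype G] {N : Subgroup G}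
    (V : FDRep ℂ G) (hN : ∀ n ∈ N, V.character n = V.character 1) {n : G} (hn : n ∈ N) :
    V.ρ n = 1 := by
  let W := FDRep.of (V.ρ.comp N.subtype)
  have hfin : Module.finrank ℂ (Representation.invariants W.ρ) = Module.finrank ℂ V := by
    have hW : ∀ m : N, W.character m = Module.finrank ℂ V := fun m =>
      (hN m m.2).trans V.char_one
    have hcard : (Nat.card N : ℂ) ≠ 0 := Nat.cast_ne_zero.mpr Nat.card_pos.ne'
    have := FDRep.average_char_eq_finrank_invariants W
    simp only [hW, sum_const, card_univ, nsmul_eq_mul, ← Nat.card_eq_fintype_card,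
      inv_mul_cancel_left₀ hcard] at this
    exact_mod_cast this.symm
  have htop : Representation.invariants W.ρ = ⊤ := Submodule.eq_top_of_finrank_eq hfin
  ext v
  exact (htop ▸ Submodule.mem_top : v ∈ Representation.invariants W.ρ) ⟨n, hn⟩

theorem FDRep.character_mul_of_character_eq {G : Type} [Group G] [Fintype G] {N : Subgroup G}
    (V : FDRep ℂ G) (hN : ∀ n ∈ N, V.character n = V.character 1) (g : G) {n : G}
    (hn : n ∈ N) : V.character (g * n) = V.character g := by
  simp only [FDRep.character, map_mul, V.ρ_eq_one_of_character_eq hN hn, mul_one]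

section Superchar

variable {G : Type} [Group G] [Fintype G] {N : Subgroup G} {X : Set (G → ℂ)}

theorem superchar_mul_of_forall_mem_ker (hirr : ∀ χ ∈ X, IsIrrChar G χ)
    (hXN : ∀ χ ∈ X, ∀ n ∈ N, χ n = χ 1) (g : G) {n : G} (hn : n ∈ N) :
    superchar X (g * n) = superchar X g := by
  refine finsum_mem_congr rfl fun χ hχ => ?_
  obtain ⟨V, -, rfl⟩ := hirr χ hχ
  rw [V.character_mul_of_character_eq (hXN _ hχ) g hn]

theorem superchar_quotient [N.Normal] (hirr : ∀ χ ∈ X, IsIrrChar G χ)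
    (hXN : ∀ χ ∈ X, ∀ n ∈ N, χ n = χ 1) (g : G) :
    superchar {χ' : G ⧸ N → ℂ | (fun g : G => χ' g) ∈ X} g = superchar X g := by
  set Y := {χ' : G ⧸ N → ℂ | (fun g : G => χ' g) ∈ X}
  let inflate : (G ⧸ N → ℂ) → G → ℂ := fun χ' g => χ' g
  have hX : X = inflate '' Y := by
    refine (Set.image_subset_iff.mpr fun _ h => h).antisymm' fun χ hχ => ?_
    have hfac : inflate (fun c => χ c.out) = χ := funext fun g => by
      obtain ⟨n, hn⟩ := QuotientGroup.mk_out_eq_mul N g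
      obtain ⟨V, -, rfl⟩ := hirr χ hχ
      rw [← V.character_mul_of_character_eq (hXN _ hχ) g n.2, ← hn]
    exact ⟨fun c => χ c.out, (hfac.symm ▸ hχ : inflate (fun c => χ c.out) ∈ X), hfac⟩
  have hinj : Set.InjOn inflate Y := fun χ₁ _ χ₂ _ h =>
    QuotientGroup.mk_surjective.injective_comp_right h
  rw [superchar, superchar, hX, finsum_mem_image hinj]
  rfl

end Superchar

section FiberSum

variable {K Q : Type*} [Group K] [Group Q] (lam : K →* ℂ)

theorem MonoidHom.sum_subgroup_eq_card_of_le_ker {S : Subgroup K} [Fintype S] (h : S ≤ lam.ker) :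
    ∑ k : S, lam k = Nat.card S := by
  simp [fun k : S => MonoidHom.mem_ker.mp (h k.2), Nat.card_eq_fintype_card]

theorem MonoidHom.sum_subgroup_eq_zero_of_not_le_ker {S : Subgroup K} [Fintype S]
    (h : ¬ S ≤ lam.ker) : ∑ k : S, lam k = 0 := by
  refine sum_hom_units_eq_zero (lam.comp S.subtype) fun h1 => h fun k hk => ?_
  exact DFunLike.congr_fun h1 ⟨k, hk⟩

variable [Fintype K] [DecidableEq Q] (π : K →* Q)

theorem MonoidHom.sum_fiber_eq_mul_sum_ker (k₀ : K) :
    ∑ k with π k = π k₀, lam k = lam k₀ * ∑ k : π.ker, lam k := by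
  rw [mul_sum, ← sum_subtype (univ.filter (π · = 1)) (by simp [MonoidHom.mem_ker])
    (fun k => lam k₀ * lam k)]
  refine sum_nbij' (k₀⁻¹ * ·) (k₀ * ·) (fun k hk => ?_) (fun k hk => ?_) (by simp)
    (by simp) fun k _ => by simp [← map_mul]
  all_goals simp_all

theorem MonoidHom.sum_fiber_eq_zero_of_notMem_range {q : Q} (hq : q ∉ π.range) :
    ∑ k with π k = q, lam k = 0 :=
  sum_eq_zero fun k hk => (hq ⟨k, (mem_filter.mp hk).2⟩).elim

end FiberSum

noncomputable def extendByZero {G : Type} [Group G] (H : Subgroup G) (f : H → ℂ) : G → ℂ :=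
  fun g => if h : g ∈ H then f ⟨g, h⟩ else 0

theorem cInd_apply {G : Type} [Group G] [Fintype G] (H : Subgroup G) (f : H → ℂ) (g : G) :
    cInd H f g = (Nat.card H : ℂ)⁻¹ * ∑ x, extendByZero H f (x⁻¹ * g * x) := rfl

theorem QuotientGroup.sum_comp_mk {G M : Type*} [Group G] [Fintype G] [AddCommMonoid M]
    (N : Subgroup G) [Fintype (G ⧸ N)] (φ : G ⧸ N → M) :
    ∑ x : G, φ x = Nat.card N • ∑ c, φ c := by
  rw [← sum_fiberwise univ (fun x : G => (x : G ⧸ N)), smul_sum]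
  refine sum_congr rfl fun c _ => ?_
  rw [sum_congr rfl fun x hx => congrArg φ (mem_filter.mp hx).2, sum_const]
  congr 1
  have := QuotientGroup.card_preimage_mk N {c}
  simp only [Nat.card_unique, mul_one] at this
  rw [← this, Nat.card_eq_fintype_card, ← Fintype.card_subtype]
  exact Fintype.card_congr (Equiv.refl _)

section Deflation

variable {G : Type} [Group G] (N : Subgroup G) [N.Normal] (H : Subgroup G) (lam : H →* ℂ)

noncomputable abbrev restrictMk : H →* G ⧸ N := (QuotientGroup.mk' N).domRestrict H

theorem ker_restrictMk : (restrictMk N H).ker = N.subgroupOf H := by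
  rw [MonoidHom.ker_domRestrict, QuotientGroup.ker_mk']

noncomputable def deflate (hlam : N.subgroupOf H ≤ lam.ker) : (restrictMk N H).range →* ℂ :=
  (QuotientGroup.lift _ lam (ker_restrictMk N H ▸ hlam)).comp
    (QuotientGroup.quotientKerEquivRange (restrictMk N H)).symm.toMonoidHom

theorem deflate_rangeRestrict (hlam : N.subgroupOf H ≤ lam.ker) (h : H) :
    deflate N H lam hlam ((restrictMk N H).rangeRestrict h) = lam h := by
  have : (QuotientGroup.quotientKerEquivRange (restrictMk N H)).symm
      ((restrictMk N H).rangeRestrict h) = h := by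
    rw [MulEquiv.symm_apply_eq]; rfl
  rw [deflate, MonoidHom.comp_apply, MulEquiv.coe_toMonoidHom, this, QuotientGroup.lift_mk]

end Deflation

section Averaging

variable {G : Type} [Group G] [Fintype G] (N : Subgroup G) [N.Normal] (H : Subgroup G)
  (lam : H →* ℂ)

theorem sum_fiber_restrictMk_of_le_ker (hlam : N.subgroupOf H ≤ lam.ker) (z : G ⧸ N) :
    ∑ h with restrictMk N H h = z, lam h =
      Nat.card (restrictMk N H).ker * extendByZero _ (deflate N H lam hlam) z := by
  by_cases hz : z ∈ (restrictMk N H).range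
  · obtain ⟨h, rfl⟩ := hz
    rw [MonoidHom.sum_fiber_eq_mul_sum_ker,
      MonoidHom.sum_subgroup_eq_card_of_le_ker _ (ker_restrictMk N H ▸ hlam), extendByZero,
      dif_pos (MonoidHom.mem_range.mpr ⟨h, rfl⟩), ← deflate_rangeRestrict N H lam hlam h,
      mul_comm]
    rfl
  · rw [MonoidHom.sum_fiber_eq_zero_of_notMem_range _ _ hz, extendByZero, dif_neg hz, mul_zero]

theorem sum_fiber_restrictMk_of_not_le_ker (hlam : ¬ N.subgroupOf H ≤ lam.ker) (z : G ⧸ N) :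
    ∑ h with restrictMk N H h = z, lam h = 0 := by
  by_cases hz : z ∈ (restrictMk N H).range
  · obtain ⟨h, rfl⟩ := hz
    rw [MonoidHom.sum_fiber_eq_mul_sum_ker,
      MonoidHom.sum_subgroup_eq_zero_of_not_le_ker _ (ker_restrictMk N H ▸ hlam), mul_zero]
  · exact MonoidHom.sum_fiber_eq_zero_of_notMem_range _ _ hz

theorem sum_extendByZero_mul (y : G) :
    ∑ n : N, extendByZero H lam (y * n) = ∑ h with restrictMk N H h = y, lam h := by
  rw [← sum_filter_of_ne (p := fun n : N => y * n ∈ H) fun n _ hn => ?_]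
  · refine sum_bij' (fun n hn => ⟨y * n, (mem_filter.mp hn).2⟩)
      (fun h hh => ⟨y⁻¹ * h, QuotientGroup.eq.mp (mem_filter.mp hh).2.symm⟩)
      (fun n _ => by simp [eq_comm, QuotientGroup.eq]) (by simp) (by simp) (by simp)
      fun n hn => dif_pos _
  · by_contra hyn
    exact hn (dif_neg hyn)

variable [Fintype (G ⧸ N)]

theorem sum_cInd_mul (g : G) :
    ∑ n : N, cInd H lam (g * n) = (Nat.card H : ℂ)⁻¹ *
      (Nat.card N * ∑ c : G ⧸ N, ∑ h with restrictMk N H h = c⁻¹ * g * c, lam h) := by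
  have hconj (x : G) : ∑ n : N, extendByZero H lam (x⁻¹ * (g * n) * x) =
      ∑ h with restrictMk N H h = (x : G ⧸ N)⁻¹ * g * x, lam h := by
    rw [← QuotientGroup.mk_inv, ← QuotientGroup.mk_mul, ← QuotientGroup.mk_mul,
      ← sum_extendByZero_mul]
    refine Fintype.sum_equiv (MulAut.conjNormal x⁻¹).toEquiv _ _ fun n => ?_
    simp [mul_assoc]
  simp only [cInd_apply, ← mul_sum]
  rw [sum_comm, sum_congr rfl fun x _ => hconj x,
    QuotientGroup.sum_comp_mk N fun c => ∑ h with restrictMk N H h = c⁻¹ * g * c, lam h,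
    nsmul_eq_mul]

theorem sum_cInd_mul_of_le_ker (hlam : N.subgroupOf H ≤ lam.ker) (g : G) :
    ∑ n : N, cInd H lam (g * n) =
      Nat.card N * cInd (restrictMk N H).range (deflate N H lam hlam) g := by
  have hcard :
      Nat.card H = Nat.card (restrictMk N H).ker * Nat.card (restrictMk N H).range := by
    rw [← Subgroup.index_ker, Subgroup.card_mul_index]
  have hker : (Nat.card (restrictMk N H).ker : ℂ) ≠ 0 := Nat.cast_ne_zero.mpr Nat.card_pos.ne'
  rw [sum_cInd_mul]
  simp only [sum_fiber_restrictMk_of_le_ker N H lam hlam, cInd_apply, ← mul_sum,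
    hcard, Nat.cast_mul]
  field_simp

theorem sum_cInd_mul_of_not_le_ker (hlam : ¬ N.subgroupOf H ≤ lam.ker) (g : G) :
    ∑ n : N, cInd H lam (g * n) = 0 := by
  rw [sum_cInd_mul]
  simp only [sum_fiber_restrictMk_of_not_le_ker N H lam hlam, sum_const_zero, mul_zero]

theorem sum_cInd_deflate {ι : Type*} [Fintype ι] (K : ι → Subgroup G)
    (μ : ∀ i, K i →* ℂ) (g : G) :
    ∑ i : {i // N.subgroupOf (K i) ≤ (μ i).ker},
        cInd (restrictMk N (K i)).range (deflate N (K i) (μ i) i.2) g =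
      (Nat.card N : ℂ)⁻¹ * ∑ n : N, ∑ i, cInd (K i) (μ i) (g * n) := by
  have hN : (Nat.card N : ℂ) ≠ 0 := Nat.cast_ne_zero.mpr Nat.card_pos.ne'
  let good i := N.subgroupOf (K i) ≤ (μ i).ker
  rw [sum_comm, mul_sum, ← sum_filter_of_ne (p := good) fun i _ hi => of_not_not fun hbad =>
      hi (by rw [sum_cInd_mul_of_not_le_ker N _ _ hbad, mul_zero]),
    sum_subtype (p := good) _ (by simp)]
  refine sum_congr rfl fun i _ => ?_
  rw [sum_cInd_mul_of_le_ker, inv_mul_cancel_left₀ hN]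

end Averaging

theorem exists_fin_sum_cInd {G : Type} [Group G] [Fintype G] {ι : Type*} [Fintype ι]
    (H : ι → Subgroup G) (lam : ∀ i, H i →* ℂ) :
    ∃ (t : ℕ) (H' : Fin t → Subgroup G) (lam' : ∀ j, H' j →* ℂ),
      ∑ j, cInd (H' j) (fun h => lam' j h) = ∑ i, cInd (H i) (fun h => lam i h) :=
  let e := Fintype.equivFin ι
  ⟨_, fun j => H (e.symm j), fun j => lam (e.symm j),
    Equiv.sum_comp e.symm fun i => cInd (H i) (lam i)⟩

theorem cQuasiMonomial_quotient_general (G : Type) [Group G] [Fintype G]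
    (C : SCTheory G) (N : Subgroup G) [N.Normal] [Fintype (G ⧸ N)]
    (Cq : SCTheory (G ⧸ N)) (hq : IsQuotientTheory C N Cq)
    (h : CQuasiMonomial C) : CQuasiMonomial Cq := by
  intro Y hY
  rw [hq.1] at hY
  obtain ⟨X, hX, hXN, rfl⟩ := hY
  have hirr : ∀ χ ∈ X, IsIrrChar G χ := fun χ hχ =>
    C.XX_cover.subset (Set.mem_sUnion_of_mem hχ hX)
  obtain ⟨t, H, lam, d, hd, hsum⟩ := h X hX
  have hsum_apply (x : G) : ∑ i, cInd (H i) (lam i) x = d * superchar X x := by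
    simpa using congrFun hsum x
  obtain ⟨s, H', lam', hs⟩ := exists_fin_sum_cInd
    (fun i : {i // N.subgroupOf (H i) ≤ (lam i).ker} => (restrictMk N (H i)).range)
    fun i => deflate N (H i) (lam i) i.2
  refine ⟨s, H', lam', d, hd, funext fun z => ?_⟩
  obtain ⟨g, rfl⟩ := QuotientGroup.mk_surjective z
  have hN : (Nat.card N : ℂ) ≠ 0 := Nat.cast_ne_zero.mpr Nat.card_pos.ne'
  rw [hs, Finset.sum_apply, sum_cInd_deflate, superchar_quotient hirr hXN,
    sum_congr rfl fun n _ => by rw [hsum_apply, superchar_mul_of_forall_mem_ker hirr hXN g n.2],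
    sum_const, card_univ, ← Nat.card_eq_fintype_card, nsmul_eq_mul, inv_mul_cancel_left₀ hN]

/-- Theorem 2.6: if `G` is `C`-quasi-monomial and `N` is `C`-normal, then `G/N` is
`C^{G/N}`-quasi-monomial. -/
theorem cQuasiMonomial_quotient (G : Type) [Group G] [Fintype G]
    (C : SCTheory G) (N : Subgroup G) [N.Normal] [Fintype (G ⧸ N)]
    (hN : CNormal C N) (Cq : SCTheory (G ⧸ N)) (hq : IsQuotientTheory C N Cq)
    (h : CQuasiMonomial C) : CQuasiMonomial Cq :=
  cQuasiMonomial_quotient_general G C N Cq hq h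
end

section
/- Let G be a finite group with supercharacter theory C = (𝒳,𝒦), 𝒳 = {X₁,…,X_m}. Then G is C-almost monomial if and only if for every k ∈ {1,…,m} there exist subgroups H₁,…,H_s ≤ G and linear characters λᵢ of Hᵢ such that λ₁^G + ⋯ + λ_s^G = Σ_{i≠k} αᵢ σ_{X_i} with all αᵢ > 0 (i ≠ k). -/
/-! The sums of induced linear characters form an additive submonoid of the class functions.
Hence adding up, over all parts `X ≠ Xk`, combinations of supercharacters that separate `X`
from `Xk` gives a realizable combination in which exactly `Xk` has coefficient zero; the
converse is the special case `Xk := Xℓ`. -/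

open scoped Classical BigOperators

namespace SCTheory

variable {G : Type} [Group G]

theorem XX_finite [Finite G] (C : SCTheory G) : C.XX.Finite := by
  have : Nonempty C.KK := ⟨⟨{1}, C.one_mem⟩⟩
  exact Set.finite_coe_iff.mp <| Nat.finite_of_card_ne_zero (C.card_eq ▸ Nat.card_pos.ne')

noncomputable def supercharComb [Finite G] (C : SCTheory G) : (Set (G → ℂ) → ℕ) →+ G → ℂ where
  toFun α g := ∑ᶠ X ∈ C.XX, (α X : ℂ) * superchar X g
  map_zero' := by ext; simp
  map_add' α β := by
    ext g
    simp only [Pi.add_apply, Nat.cast_add, add_mul]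
    exact finsum_mem_add_distrib C.XX_finite

end SCTheory

section InducedLinear

variable (G : Type) [Group G] [Fintype G]

noncomputable def inducedLinear (p : Σ H : Subgroup G, H →* ℂ) : G → ℂ :=
  cInd p.1 fun h => p.2 h

noncomputable def inducedLinearSums : AddSubmonoid (G → ℂ) :=
  AddSubmonoid.closure (Set.range (inducedLinear G))

variable {G}

theorem mem_inducedLinearSums_iff {θ : G → ℂ} :
    θ ∈ inducedLinearSums G ↔
      ∃ (t : ℕ) (p : Fin t → Σ H : Subgroup G, H →* ℂ), ∑ i, inducedLinear G (p i) = θ := by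
  refine ⟨fun hθ => ?_, fun ⟨t, p, hp⟩ => hp ▸ sum_mem fun i _ => ?_⟩
  · induction hθ using AddSubmonoid.closure_induction with
    | mem _ hθ =>
      obtain ⟨q, rfl⟩ := hθ
      exact ⟨1, fun _ => q, by simp⟩
    | zero => exact ⟨0, Fin.elim0, by simp⟩
    | add _ _ _ _ h₁ h₂ =>
      obtain ⟨t₁, p₁, rfl⟩ := h₁
      obtain ⟨t₂, p₂, rfl⟩ := h₂
      exact ⟨t₁ + t₂, Fin.append p₁ p₂, by simp [Fin.sum_univ_add]⟩
  · exact AddSubmonoid.subset_closure ⟨p i, rfl⟩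

end InducedLinear

/-- Proposition 2.11: `G` is `C`-almost monomial iff for every part `Xk` there are
induced linear characters summing to a combination of all supercharacters with
positive coefficients except `Xk`, whose coefficient is zero. -/
theorem cAlmostMonomial_iff_complement (G : Type) [Group G] [Fintype G]
    (C : SCTheory G) :
    CAlmostMonomial C ↔
      ∀ Xk ∈ C.XX,
        ∃ (s : ℕ) (H : Fin s → Subgroup G) (lam : ∀ i, (H i) →* ℂ)
          (α : Set (G → ℂ) → ℕ),
          α Xk = 0 ∧ (∀ X ∈ C.XX, X ≠ Xk → 0 < α X) ∧
          (∑ i, cInd (H i) (fun h => lam i h)) =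
            fun g => ∑ᶠ X ∈ C.XX, (α X : ℂ) * superchar X g := by
  constructor
  · intro hAM Xk hXk
    set T := C.XX_finite.toFinset.erase Xk
    have hsep : ∀ X ∈ T, ∃ α : Set (G → ℂ) → ℕ,
        0 < α X ∧ α Xk = 0 ∧ C.supercharComb α ∈ inducedLinearSums G := by
      intro X hX
      obtain ⟨hne, hXC⟩ := Finset.mem_erase.mp hX
      obtain ⟨t, H, lam, α, hpos, hzero, hα⟩ :=
        hAM X (C.XX_finite.mem_toFinset.mp hXC) Xk hXk hne
      exact ⟨α, hpos, hzero, mem_inducedLinearSums_iff.mpr ⟨t, fun i => ⟨H i, lam i⟩, hα⟩⟩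
    choose! α hpos hzero hmem using hsep
    have hsum : C.supercharComb (∑ X ∈ T, α X) ∈ inducedLinearSums G := by
      rw [map_sum]
      exact sum_mem hmem
    obtain ⟨s, p, hp⟩ := mem_inducedLinearSums_iff.mp hsum
    refine ⟨s, fun i => (p i).1, fun i => (p i).2, ∑ X ∈ T, α X, ?_, fun Y hY hne => ?_, hp⟩
    · rw [Finset.sum_apply]
      exact Finset.sum_eq_zero hzero
    · have hYT : Y ∈ T := Finset.mem_erase.mpr ⟨hne, C.XX_finite.mem_toFinset.mpr hY⟩
      rw [Finset.sum_apply]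
      exact (hpos Y hYT).trans_le
        (Finset.single_le_sum (f := fun X => α X Y) (fun _ _ => Nat.zero_le _) hYT)
  · intro h Xk hXk Xl hXl hne
    obtain ⟨s, H, lam, α, hzero, hpos, hα⟩ := h Xl hXl
    exact ⟨s, H, lam, α, hpos Xk hXk hne, hzero, hα⟩
end

section
/- Abstract form of Theorem 3.4: Let ℓ₁,…,ℓ_m ∈ ℤ with ℓ₁ + ⋯ + ℓ_m ≥ 0, and suppose that no two distinct indices k, ℓ both satisfy ℓ_k > 0 and ℓ_ℓ > 0. Further assume: for every pair j ≠ k there exist nonnegative integers α₁,…,α_m with α_j > 0, α_k = 0, and Σᵢ αᵢℓᵢ ≥ 0. Then all ℓᵢ ≥ 0. -/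
open scoped Classical BigOperators

lemma sum_neg_of_all_nonpos {m : ℕ} (f : Fin m → ℤ) (i0 : Fin m)
    (hall : ∀ i, f i ≤ 0) (h0 : f i0 < 0) : ∑ i, f i < 0 := by
  have := Finset.add_sum_erase Finset.univ f (Finset.mem_univ i0)
  have h2 : ∑ i ∈ Finset.univ.erase i0, f i ≤ 0 :=
    Finset.sum_nonpos fun i _ => hall i
  omega

/-- Combinatorial core of Theorem 3.4: if `Σℓᵢ ≥ 0`, no two distinct indices have
`ℓ > 0`, and for every pair `j ≠ k` there are nonnegative integers `α` with
`α_j > 0`, `α_k = 0` and `Σ αᵢℓᵢ ≥ 0`, then all `ℓᵢ ≥ 0`. -/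
theorem orders_nonneg (m : ℕ) (l : Fin m → ℤ)
    (hsum : 0 ≤ ∑ i, l i)
    (hnocommon : ∀ k j : Fin m, k ≠ j → ¬(0 < l k ∧ 0 < l j))
    (halmost : ∀ j k : Fin m, j ≠ k →
      ∃ α : Fin m → ℕ, 0 < α j ∧ α k = 0 ∧ 0 ≤ ∑ i, (α i : ℤ) * l i) :
    ∀ i, 0 ≤ l i := by
  intro i0
  by_contra hneg
  push_neg at hneg
  by_cases hp : ∃ p, 0 < l p
  · obtain ⟨p, hpp⟩ := hp
    have hne : i0 ≠ p := fun e => by rw [e] at hneg; omega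
    obtain ⟨α, hα0, hαp, hαs⟩ := halmost i0 p hne
    have hterm : ∀ i, (α i : ℤ) * l i ≤ 0 := by
      intro i
      by_cases hip : i = p
      · simp [hip, hαp]
      · have hli : l i ≤ 0 := by
          by_contra hli; push_neg at hli
          exact hnocommon i p hip ⟨hli, hpp⟩
        exact mul_nonpos_of_nonneg_of_nonpos (by positivity) hli
    have h0 : (α i0 : ℤ) * l i0 < 0 :=
      mul_neg_of_pos_of_neg (by exact_mod_cast hα0) hneg
    exact absurd hαs (not_le.mpr (sum_neg_of_all_nonpos (fun i => (α i : ℤ) * l i) i0 hterm h0))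
  · push_neg at hp
    have := sum_neg_of_all_nonpos l i0 (fun i => not_lt.mp (by exact fun h => (hp i).not_gt h)) hneg
    omega
end
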